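/- Define ξ ∈ {0,1}^ℤ by ξ(n) = 0 for all n < 0 and, on the nonnegative coordinates, ξ begins with each of the words ω_n defined by ω₁ = 1 and ω_{n+1} = ω_n 0ⁿ ω_n. Let T be the left shift on {0,1}^ℤ and let X be the closure of the T-orbit of ξ. Then: (a) for any x ∈ X, the reflection x̄ defined by x̄(n) = x(−n) also belongs to X; and (b) for any x ∈ X other than the all-zeros sequence, the symbol 1 occurs in x at infinitely many coordinates. -/

import Mathlib

/-!
Each `ω_n` is a palindrome, and in `ξ` the word `ω_k` is flanked by `0^{k+1}` on both sides
(the negative coordinates on the left, the middle block of `ω_{k+1}` on the right), so every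
finite window of `ξ` reappears in `ξ` reversed. Since the points of `X` are exactly the
sequences all of whose finite windows occur in `ξ`, this gives (a).

For (b): every `1` of `ω_n` lies in a copy of `ω_k` for each `k ≤ n`, and that copy begins and
ends with `1` and is longer than `k + 1`. Hence next to any `1` of `ξ`, within distance
`|ω_{d+1}|`, there is another `1` that lies before it or more than `d` after it. This passes to
the points of `X`, and a point with finitely many `1`s violates it at its leftmost `1`, taking
`d` to be the spread of its `1`s.
-/

open Filter Topology

/-- The `n`-th iterate (`n ∈ ℤ`) of a homeomorphism `f`, as a map `X → X`. -/
def iterZ {X : Type*} [TopologicalSpace X] (f : X ≃ₜ X) (n : ℤ) : X → X :=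
  ⇑(f.toEquiv ^ n)

/-- The ω-limit set of `x`: limits of `f^{nᵢ}(x)` along strictly increasing
sequences `0 < n₁ < n₂ < ⋯`. -/
def posLimitSet {X : Type*} [TopologicalSpace X] (f : X ≃ₜ X) (x : X) : Set X :=
  {y | ∃ n : ℕ → ℕ, StrictMono n ∧ 0 < n 0 ∧
    Tendsto (fun i => iterZ f (n i) x) atTop (𝓝 y)}

/-- The α-limit set of `x`: limits of `f^{-nᵢ}(x)` along strictly increasing
sequences `0 < n₁ < n₂ < ⋯`. -/
def negLimitSet {X : Type*} [TopologicalSpace X] (f : X ≃ₜ X) (x : X) : Set X :=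
  {y | ∃ n : ℕ → ℕ, StrictMono n ∧ 0 < n 0 ∧
    Tendsto (fun i => iterZ f (-(n i : ℤ)) x) atTop (𝓝 y)}

/-- `x` is recurrent if it is positively or negatively recurrent. -/
def RecurrentPt {X : Type*} [TopologicalSpace X] (f : X ≃ₜ X) (x : X) : Prop :=
  x ∈ posLimitSet f x ∨ x ∈ negLimitSet f x

/-- `f` is expansive with expansivity constant `c`. -/
def ExpansiveWith {X : Type*} [MetricSpace X] (f : X ≃ₜ X) (c : ℝ) : Prop :=
  0 < c ∧ ∀ x y : X, x ≠ y → ∃ n : ℤ, c < dist (iterZ f n x) (iterZ f n y)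

/-- `f` is expansive. -/
def Expansive {X : Type*} [MetricSpace X] (f : X ≃ₜ X) : Prop :=
  ∃ c : ℝ, ExpansiveWith f c

/-- The full orbit `{fⁿ(x) : n ∈ ℤ}` of a point. -/
def fullOrbit {X : Type*} [TopologicalSpace X] (f : X ≃ₜ X) (x : X) : Set X :=
  Set.range fun n : ℤ => iterZ f n x

/-- `E` is a minimal set: nonempty, closed, invariant (`f(E) = E`), with no proper
nonempty closed invariant subset. -/
def IsMinimalSet {X : Type*} [TopologicalSpace X] (f : X ≃ₜ X) (E : Set X) : Prop :=
  E.Nonempty ∧ IsClosed E ∧ f '' E = E ∧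
    ∀ E' ⊆ E, E'.Nonempty → IsClosed E' → f '' E' = E' → E' = E

/-- `x` is almost periodic: the closure of its orbit is a minimal set. -/
def AlmostPeriodicPt {X : Type*} [TopologicalSpace X] (f : X ≃ₜ X) (x : X) : Prop :=
  IsMinimalSet f (closure (fullOrbit f x))

/-- The left shift `σ` on `ℤ → F`, as a homeomorphism. -/
def shiftH (F : Type*) [TopologicalSpace F] : (ℤ → F) ≃ₜ (ℤ → F) where
  toFun x n := x (n + 1)
  invFun x n := x (n - 1)
  left_inv x := by funext n; simp
  right_inv x := by funext n; simp
  continuous_toFun := continuous_pi fun n => continuous_apply (n + 1)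
  continuous_invFun := continuous_pi fun n => continuous_apply (n - 1)

/-- The `n`-th power (`n ∈ ℕ`) of a homeomorphism, as a homeomorphism. -/
def hpow {X : Type*} [TopologicalSpace X] (f : X ≃ₜ X) : ℕ → X ≃ₜ X
  | 0 => Homeomorph.refl X
  | n + 1 => (hpow f n).trans f

/-- The local stable set `W^s_ε(x)`. -/
def localStable {X : Type*} [MetricSpace X] (f : X ≃ₜ X) (ε : ℝ) (x : X) : Set X :=
  {y | ∀ n : ℕ, dist (iterZ f n x) (iterZ f n y) ≤ ε}

/-- The local unstable set `W^u_ε(x)`. -/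
def localUnstable {X : Type*} [MetricSpace X] (f : X ≃ₜ X) (ε : ℝ) (x : X) : Set X :=
  {y | ∀ n : ℕ, dist (iterZ f (-(n : ℤ)) x) (iterZ f (-(n : ℤ)) y) ≤ ε}

/-- The stable set `W^s(x)`. -/
def stableSet {X : Type*} [MetricSpace X] (f : X ≃ₜ X) (x : X) : Set X :=
  {y | Tendsto (fun n : ℕ => dist (iterZ f n x) (iterZ f n y)) atTop (𝓝 0)}

/-- The unstable set `W^u(x)`. -/
def unstableSet {X : Type*} [MetricSpace X] (f : X ≃ₜ X) (x : X) : Set X :=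
  {y | Tendsto (fun n : ℕ => dist (iterZ f (-(n : ℤ)) x) (iterZ f (-(n : ℤ)) y)) atTop (𝓝 0)}

/-- `f` has the pseudo orbit tracing property. -/
def POTP {X : Type*} [MetricSpace X] (f : X ≃ₜ X) : Prop :=
  ∀ ε > (0 : ℝ), ∃ δ > (0 : ℝ), ∀ u : ℤ → X,
    (∀ i : ℤ, dist (f (u i)) (u (i + 1)) < δ) →
    ∃ x : X, ∀ i : ℤ, dist (iterZ f i x) (u i) < ε

/-- The words `ω_{k+1}` over `{0,1}` (with `false = 0`, `true = 1`):
`wordW 0 = ω₁ = 1` and `wordW (k+1) = ω_{k+2} = ω_{k+1} 0^{k+1} ω_{k+1}`. -/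
def wordW : ℕ → List Bool
  | 0 => [true]
  | k + 1 => wordW k ++ List.replicate (k + 1) false ++ wordW k

lemma length_wordW_succ (k : ℕ) :
    (wordW (k + 1)).length = (wordW k).length + (k + 1) + (wordW k).length := by
  simp [wordW, Nat.add_assoc]

lemma lt_length_wordW (k : ℕ) : k < (wordW k).length := by
  induction k with
  | zero => simp [wordW]
  | succ k ih => rw [length_wordW_succ]; omega

lemma getD_wordW_succ_of_lt {k i : ℕ} (h : i < (wordW k).length + (k + 1)) :
    (wordW (k + 1)).getD i false = (wordW k).getD i false := by
  rw [wordW, List.getD_append _ _ _ _ (by simpa using h)]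
  rcases lt_or_ge i (wordW k).length with hi | hi
  · exact List.getD_append _ _ _ _ hi
  · rw [List.getD_append_right _ _ _ _ hi, List.getD_eq_default _ _ hi,
      List.getD_replicate _ (by omega)]

lemma getD_wordW_succ_add (k i : ℕ) :
    (wordW (k + 1)).getD ((wordW k).length + (k + 1) + i) false = (wordW k).getD i false := by
  rw [wordW, List.getD_append_right _ _ _ _ (by simp)]
  simp

lemma getD_wordW_zero (k : ℕ) : (wordW k).getD 0 false = true := by
  induction k with
  | zero => rfl
  | succ k ih => rw [getD_wordW_succ_of_lt (by omega), ih]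

lemma reverse_wordW (k : ℕ) : (wordW k).reverse = wordW k := by
  induction k with
  | zero => rfl
  | succ k ih => simp [wordW, ih]

lemma getD_wordW_length_sub_one_sub {k i : ℕ} (h : i < (wordW k).length) :
    (wordW k).getD ((wordW k).length - 1 - i) false = (wordW k).getD i false := by
  rw [← List.getD_reverse i h, reverse_wordW]

lemma getD_wordW_length_sub_one (k : ℕ) :
    (wordW k).getD ((wordW k).length - 1) false = true := by
  have h := getD_wordW_length_sub_one_sub (k := k) (i := 0) (by have := lt_length_wordW k; omega)
  rwa [Nat.sub_zero, getD_wordW_zero] at h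

lemma exists_wordW_block {k n i : ℕ} (hkn : k ≤ n) (hi : (wordW n).getD i false = true) :
    ∃ s, s ≤ i ∧ i < s + (wordW k).length ∧ s + (wordW k).length ≤ (wordW n).length ∧
      ∀ j < (wordW k).length, (wordW n).getD (s + j) false = (wordW k).getD j false := by
  induction n, hkn using Nat.le_induction generalizing i with
  | base =>
    have hik : i < (wordW k).length := by
      by_contra! h
      rw [List.getD_eq_default _ _ h] at hi
      exact Bool.false_ne_true hi
    exact ⟨0, by omega, by omega, by omega, by simp⟩
  | succ n hkn ih =>
    have hlen := length_wordW_succ n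
    rcases lt_or_ge i ((wordW n).length + (n + 1)) with hi' | hi'
    · rw [getD_wordW_succ_of_lt hi'] at hi
      obtain ⟨s, hsi, his, hsn, hblock⟩ := ih hi
      refine ⟨s, hsi, his, by omega, fun j hj => ?_⟩
      rw [getD_wordW_succ_of_lt (by omega), hblock j hj]
    · obtain ⟨i, rfl⟩ := Nat.exists_eq_add_of_le hi'
      rw [getD_wordW_succ_add] at hi
      obtain ⟨s, hsi, his, hsn, hblock⟩ := ih hi
      refine ⟨(wordW n).length + (n + 1) + s, by omega, by omega, by omega, fun j hj => ?_⟩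
      rw [Nat.add_assoc _ s, getD_wordW_succ_add, hblock j hj]

lemma iterZ_shiftH_apply {α : Type*} [TopologicalSpace α] (n : ℤ) (x : ℤ → α) (j : ℤ) :
    iterZ (shiftH α) n x j = x (j + n) := by
  induction n using Int.induction_on generalizing x j with
  | zero => simp [iterZ]
  | succ n ih =>
    simp only [iterZ, zpow_add_one, Equiv.Perm.mul_apply] at ih ⊢
    rw [ih]
    change x (j + n + 1) = _
    rw [add_assoc]
  | pred n ih =>
    simp only [iterZ, zpow_sub_one, Equiv.Perm.mul_apply] at ih ⊢
    rw [ih]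
    change x (j + -n - 1) = _
    rw [add_sub_assoc]

lemma mem_closure_pi_iff_exists_eqOn {ι α : Type*} [TopologicalSpace α] [DiscreteTopology α]
    {S : Set (ι → α)} {x : ι → α} :
    x ∈ closure S ↔ ∀ I : Set ι, I.Finite → ∃ y ∈ S, Set.EqOn y x I := by
  have hbasis : (𝓝 x).HasBasis Set.Finite fun I => {y | ∀ i ∈ I, y i = x i} := by
    simpa only [nhds_pi, nhds_discrete] using Filter.hasBasis_pi_pure x
  exact mem_closure_iff_nhds_basis hbasis

lemma mem_closure_fullOrbit_shiftH_iff {α : Type*} [TopologicalSpace α] [DiscreteTopology α]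
    {ξ x : ℤ → α} : x ∈ closure (fullOrbit (shiftH α) ξ) ↔
      ∀ I : Set ℤ, I.Finite → ∃ m : ℤ, ∀ i ∈ I, ξ (i + m) = x i := by
  simp only [mem_closure_pi_iff_exists_eqOn, fullOrbit, Set.exists_range_iff, Set.EqOn,
    iterZ_shiftH_apply]

section Xi

variable {ξ : ℤ → Bool}

lemma xi_eq_getD_wordW
    (hpre : ∀ k : ℕ, ∀ i : ℕ, i < (wordW k).length → ξ (i : ℤ) = (wordW k).getD i false)
    {k j : ℕ} (h : j < (wordW k).length + (k + 1)) : ξ j = (wordW k).getD j false := by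
  rw [hpre (k + 1) j (by rw [length_wordW_succ]; omega), getD_wordW_succ_of_lt h]

lemma xi_length_sub_one_sub (hneg : ∀ n : ℤ, n < 0 → ξ n = false)
    (hpre : ∀ k : ℕ, ∀ i : ℕ, i < (wordW k).length → ξ (i : ℤ) = (wordW k).getD i false)
    (k : ℕ) {j : ℤ} (h₁ : -(k + 1 : ℤ) ≤ j) (h₂ : j ≤ (wordW k).length + k) :
    ξ ((wordW k).length - 1 - j) = ξ j := by
  wlog hj : 0 ≤ j generalizing j
  · have h := this (j := (wordW k).length - 1 - j) (by omega) (by omega) (by omega)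
    rw [sub_sub_cancel] at h
    exact h.symm
  lift j to ℕ using hj
  rcases lt_or_ge j (wordW k).length with h | h
  · rw [show ((wordW k).length : ℤ) - 1 - j = (((wordW k).length - 1 - j : ℕ) : ℤ) by omega,
      hpre k _ (by omega), hpre k _ h, getD_wordW_length_sub_one_sub h]
  · rw [hneg _ (by omega), xi_eq_getD_wordW hpre (k := k) (by omega), List.getD_eq_default _ _ h]

lemma xi_exists_reflected_window (hneg : ∀ n : ℤ, n < 0 → ξ n = false)
    (hpre : ∀ k : ℕ, ∀ i : ℕ, i < (wordW k).length → ξ (i : ℤ) = (wordW k).getD i false)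
    (b : ℤ) {I : Set ℤ} (hI : I.Finite) : ∃ c : ℤ, ∀ i ∈ I, ξ (i + c) = ξ (b - i) := by
  obtain ⟨N, hN⟩ := (hI.image Int.natAbs).bddAbove
  set k := N + b.natAbs
  have hk := lt_length_wordW k
  refine ⟨(wordW k).length - 1 - b, fun i hi => ?_⟩
  have hiN : i.natAbs ≤ N := hN (Set.mem_image_of_mem _ hi)
  rw [← xi_length_sub_one_sub hneg hpre k (j := b - i) (by omega) (by omega)]
  ring_nf

lemma xi_exists_block (hneg : ∀ n : ℤ, n < 0 → ξ n = false)
    (hpre : ∀ k : ℕ, ∀ i : ℕ, i < (wordW k).length → ξ (i : ℤ) = (wordW k).getD i false)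
    (k : ℕ) {c : ℤ} (hc : ξ c = true) :
    ∃ s : ℤ, s ≤ c ∧ c < s + (wordW k).length ∧ ξ s = true ∧
      ξ (s + (wordW k).length - 1) = true := by
  have hc₀ : 0 ≤ c := by
    by_contra! h
    rw [hneg c h] at hc
    exact Bool.false_ne_true hc
  lift c to ℕ using hc₀
  have hcn := lt_length_wordW (c + k)
  have hk := lt_length_wordW k
  obtain ⟨s, hsc, hcs, hsn, hblock⟩ :=
    exists_wordW_block (k := k) (n := c + k) (by omega) (hpre (c + k) c (by omega) ▸ hc)
  refine ⟨s, by omega, by omega, ?_, ?_⟩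
  · rw [hpre (c + k) s (by omega), ← Nat.add_zero s, hblock 0 (by omega), getD_wordW_zero]
  · rw [show (s : ℤ) + (wordW k).length - 1 = ((s + ((wordW k).length - 1) : ℕ) : ℤ) by omega,
      hpre (c + k) _ (by omega), hblock _ (by omega), getD_wordW_length_sub_one]

lemma xi_exists_one_outside (hneg : ∀ n : ℤ, n < 0 → ξ n = false)
    (hpre : ∀ k : ℕ, ∀ i : ℕ, i < (wordW k).length → ξ (i : ℤ) = (wordW k).getD i false)
    {c : ℤ} (hc : ξ c = true) (d : ℕ) :
    ∃ t : ℤ, |t| < (wordW (d + 1)).length ∧ (t < 0 ∨ d < t) ∧ ξ (c + t) = true := by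
  obtain ⟨s, hsc, hcs, hs, hs'⟩ := xi_exists_block hneg hpre (d + 1) hc
  have hd := lt_length_wordW (d + 1)
  rcases hsc.lt_or_eq with hsc | rfl
  · exact ⟨s - c, abs_lt.2 ⟨by omega, by omega⟩, Or.inl (by omega), by rwa [add_sub_cancel]⟩
  · exact ⟨(wordW (d + 1)).length - 1, abs_lt.2 ⟨by omega, by omega⟩, Or.inr (by omega),
      by rwa [← add_sub_assoc]⟩

lemma reflect_mem_closure_fullOrbit (hneg : ∀ n : ℤ, n < 0 → ξ n = false)
    (hpre : ∀ k : ℕ, ∀ i : ℕ, i < (wordW k).length → ξ (i : ℤ) = (wordW k).getD i false)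
    {x : ℤ → Bool} (hx : x ∈ closure (fullOrbit (shiftH Bool) ξ)) :
    (fun n : ℤ => x (-n)) ∈ closure (fullOrbit (shiftH Bool) ξ) := by
  rw [mem_closure_fullOrbit_shiftH_iff] at hx ⊢
  intro I hI
  obtain ⟨m, hm⟩ := hx (Neg.neg '' I) (hI.image _)
  obtain ⟨c, hc⟩ := xi_exists_reflected_window hneg hpre m hI
  refine ⟨c, fun i hi => ?_⟩
  rw [hc i hi, ← hm (-i) (Set.mem_image_of_mem _ hi), neg_add_eq_sub]

lemma exists_one_outside_of_mem_closure_fullOrbit (hneg : ∀ n : ℤ, n < 0 → ξ n = false)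
    (hpre : ∀ k : ℕ, ∀ i : ℕ, i < (wordW k).length → ξ (i : ℤ) = (wordW k).getD i false)
    {x : ℤ → Bool} (hx : x ∈ closure (fullOrbit (shiftH Bool) ξ)) {p : ℤ} (hp : x p = true)
    (d : ℕ) : ∃ t : ℤ, (t < 0 ∨ d < t) ∧ x (p + t) = true := by
  set L : ℤ := ((wordW (d + 1)).length : ℤ)
  obtain ⟨m, hm⟩ := mem_closure_fullOrbit_shiftH_iff.1 hx (Set.Icc (p - L) (p + L))
    (Set.finite_Icc _ _)
  have hL : 0 < L := by have := lt_length_wordW (d + 1); omega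
  obtain ⟨t, ht, hside, hξ⟩ :=
    xi_exists_one_outside hneg hpre (c := p + m) (by rw [hm p ⟨by omega, by omega⟩, hp]) d
  rw [abs_lt] at ht
  refine ⟨t, hside, ?_⟩
  rw [← hm (p + t) ⟨by omega, by omega⟩, ← hξ, add_right_comm]

end Xi

/-- With `ξ` and `X` as in the construction: (a) `X` is closed under
the reflection `x̄(n) = x(−n)`; (b) every point of `X` other than the all-zeros sequence
has infinitely many coordinates equal to `1`. -/
theorem stmt_19 (ξ : ℤ → Bool)
    (hneg : ∀ n : ℤ, n < 0 → ξ n = false)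
    (hpre : ∀ k : ℕ, ∀ i : ℕ, i < (wordW k).length → ξ (i : ℤ) = (wordW k).getD i false)
    (X : Set (ℤ → Bool)) (hX : X = closure (fullOrbit (shiftH Bool) ξ)) :
    (∀ x ∈ X, (fun n : ℤ => x (-n)) ∈ X) ∧
    (∀ x ∈ X, x ≠ (fun _ : ℤ => false) → {n : ℤ | x n = true}.Infinite) := by
  subst hX
  refine ⟨fun x hx => reflect_mem_closure_fullOrbit hneg hpre hx, fun x hx hx0 hfin => ?_⟩
  obtain ⟨n, hn⟩ := Function.ne_iff.1 hx0
  obtain ⟨p, hp, hpmin⟩ := Set.exists_min_image _ id hfin ⟨n, by simpa using hn⟩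
  obtain ⟨M, hM⟩ := hfin.bddAbove
  obtain ⟨t, hside, ht⟩ :=
    exists_one_outside_of_mem_closure_fullOrbit hneg hpre hx hp (M - p).toNat
  have h₁ : p ≤ p + t := hpmin _ ht
  have h₂ : p + t ≤ M := hM ht
  omega
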